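/- arXiv:1904.05858 — 3 statements merged into one kernel-verified Lean document; each statement's English description precedes it below -/
import Mathlib

section
/- For any category C, the source functor s : Tw(C)^op → C from the opposite of the twisted arrow category (sending an arrow to its source) is homotopy terminal; that is, for every object j of C, the comma category (j ↓ s) has a contractible nerve. -/
/-!
STATEMENT 0: For any category `C`, the source functor `s : Tw(C)ᵒᵖ ⥤ C` from
the opposite of the twisted arrow category is homotopy terminal: for every
object `j` of `C`, the comma category `(j ↓ s)` has contractible nerve.
-/

open CategoryTheory Simplicial CategoryTheory.Limits

universe v u w

/-- The opposite of the twisted arrow category of `C`: objects are arrows of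
`C`; a morphism from `(a → b)` to `(c → d)` is a pair `u : a → c`, `v : d → b`
with `u ≫ (c → d) ≫ v = (a → b)`. -/
structure TwOp (C : Type u) [Category.{v} C] : Type max u v where
  left : C
  right : C
  hom : left ⟶ right

instance (C : Type u) [Category.{v} C] : Category (TwOp C) where
  Hom A B := { p : (A.left ⟶ B.left) × (B.right ⟶ A.right) //
    p.1 ≫ B.hom ≫ p.2 = A.hom }
  id A := ⟨(𝟙 _, 𝟙 _), by simp⟩
  comp f g := ⟨(f.val.1 ≫ g.val.1, g.val.2 ≫ f.val.2), by
    dsimp only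
    slice_lhs 2 4 => rw [g.property]
    simpa using f.property⟩
  id_comp f := by apply Subtype.ext; simp
  comp_id f := by apply Subtype.ext; simp
  assoc f g h := by apply Subtype.ext; simp

/-- The source functor `Tw(C)ᵒᵖ ⥤ C`, remembering the source of an arrow. -/
def TwOp.src (C : Type u) [Category.{v} C] : TwOp C ⥤ C where
  obj A := A.left
  map f := f.val.1

/-- The map of simplicial sets `X ⟶ Δ[1]` constant at the vertex `k`. -/
def vertexMap (X : SSet) (k : Fin 2) : X ⟶ Δ[1] where
  app m := TypeCat.ofHom (fun _ => SSet.stdSimplex.const 1 k m)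

/-- An elementary simplicial homotopy between two maps of simplicial sets. -/
def ElemHomotopy {X Y : SSet.{w}} (f g : X ⟶ Y) : Prop :=
  ∃ H : Limits.prod X Δ[1] ⟶ Y,
    Limits.prod.lift (𝟙 X) (vertexMap X 0) ≫ H = f ∧
    Limits.prod.lift (𝟙 X) (vertexMap X 1) ≫ H = g

/-- Simplicial homotopy: the equivalence relation generated by elementary
homotopies. -/
def SHomotopic {X Y : SSet} (f g : X ⟶ Y) : Prop :=
  Relation.EqvGen ElemHomotopy f g

/-- A simplicial set is contractible if it is simplicially homotopy equivalent
to the point `Δ[0]`. -/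
def SSetContractible (S : SSet) : Prop :=
  ∃ (p : S ⟶ Δ[0]) (s : Δ[0] ⟶ S),
    SHomotopic (p ≫ s) (𝟙 S) ∧ SHomotopic (s ≫ p) (𝟙 Δ[0])

/-!
Write an object of `(j ↓ s)` as `j ⟶ a ⟶ b`. Collapsing it to `j ⟶ j ⟶ b` (identity, then the
composite) is an endofunctor `R` with natural transformations `R ⟶ 𝟭`, given by `(j ⟶ a, 𝟙 b)`,
and `R ⟶ const (j ⟶ j ⟶ j)`, given by `(𝟙 j, j ⟶ b)`. A natural transformation induces a
simplicial homotopy between the maps of nerves, via the cylinder `Fin 2 × D ⥤ E`, so the identity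
of the nerve is homotopic to a constant map.
-/

open MonoidalCategory CartesianMonoidalCategory

lemma elemHomotopy_of_ι_comp {X Y : SSet.{w}} {f g : X ⟶ Y} (h : X ⊗ Δ[1] ⟶ Y)
    (h₀ : SSet.ι₀ ≫ h = f) (h₁ : SSet.ι₁ ≫ h = g) : ElemHomotopy f g := by
  have lift_vertexMap (k : Fin 2) : prod.lift (𝟙 X) (vertexMap X k) ≫
      (lift prod.fst prod.snd : Limits.prod X Δ[1] ⟶ X ⊗ Δ[1]) = lift (𝟙 X) (vertexMap X k) := by
    ext : 1
    · simpa using prod.lift_fst _ _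
    · simpa using prod.lift_snd _ _
  -- `SSet.ι₀` and `SSet.ι₁` are `lift (𝟙 X) (vertexMap X k)` by definition.
  refine ⟨lift prod.fst prod.snd ≫ h, ?_, ?_⟩
  · rw [← Category.assoc, lift_vertexMap, ← h₀]; rfl
  · rw [← Category.assoc, lift_vertexMap, ← h₁]; rfl

namespace CategoryTheory.NatTrans

variable {D E : Type u} [Category.{v} D] [Category.{v} E] {F G : D ⥤ E}

def cylinder (α : F ⟶ G) : Fin 2 × D ⥤ E :=
  Functor.uncurry.obj (ComposableArrows.mk₁ α)

lemma sectR_comp_cylinder (α : F ⟶ G) (i : Fin 2) :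
    Prod.sectR i D ⋙ cylinder α = (ComposableArrows.mk₁ α).obj i :=
  Functor.congr_obj (Functor.curry_obj_uncurry_obj _) i

def nerveHomotopy (α : F ⟶ G) : nerve D ⊗ Δ[1] ⟶ nerve E where
  app _ := TypeCat.ofHom fun p =>
    (SSet.stdSimplex.asOrderHom p.2).monotone.functor.prod' p.1 ⋙ cylinder α

lemma ι₀_nerveHomotopy (α : F ⟶ G) : SSet.ι₀ ≫ nerveHomotopy α = nerveMap F := by
  ext m σ
  exact congrArg ((σ : Fin _ ⥤ D) ⋙ ·) (sectR_comp_cylinder α 0)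

lemma ι₁_nerveHomotopy (α : F ⟶ G) : SSet.ι₁ ≫ nerveHomotopy α = nerveMap G := by
  ext m σ
  exact congrArg ((σ : Fin _ ⥤ D) ⋙ ·) (sectR_comp_cylinder α 1)

lemma sHomotopic_nerveMap (α : F ⟶ G) : SHomotopic (nerveMap F) (nerveMap G) :=
  .rel _ _ (elemHomotopy_of_ι_comp _ (ι₀_nerveHomotopy α) (ι₁_nerveHomotopy α))

end CategoryTheory.NatTrans

lemma sSetContractible_nerve_of_natTrans {D : Type u} [Category.{v} D] (e : D) {R : D ⥤ D}
    (α : R ⟶ 𝟭 D) (β : R ⟶ (Functor.const D).obj e) : SSetContractible (nerve D) := by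
  refine ⟨SSet.stdSimplex.isTerminalObj₀.from _, SSet.const (ComposableArrows.mk₀ e), ?_, ?_⟩
  -- The composite `nerve D ⟶ Δ[0] ⟶ nerve D` is `nerveMap (const e)` by definition.
  · exact .trans _ _ _ (.symm _ _ β.sHomotopic_nerveMap) α.sHomotopic_nerveMap
  · rw [SSet.stdSimplex.isTerminalObj₀.hom_ext (_ ≫ _) (𝟙 _)]
    exact .refl _

namespace TwOp

variable {C : Type u} [Category.{v} C] {A B : TwOp C}

def homMk (u : A.left ⟶ B.left) (v : B.right ⟶ A.right) (w : u ≫ B.hom ≫ v = A.hom) :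
    A ⟶ B :=
  ⟨(u, v), w⟩

def Hom.fst (f : A ⟶ B) : A.left ⟶ B.left := f.val.1

def Hom.snd (f : A ⟶ B) : B.right ⟶ A.right := f.val.2

@[ext] lemma hom_ext {f g : A ⟶ B} (h₁ : Hom.fst f = Hom.fst g) (h₂ : Hom.snd f = Hom.snd g) :
    f = g :=
  Subtype.ext (Prod.ext h₁ h₂)

lemma Hom.w (f : A ⟶ B) : Hom.fst f ≫ B.hom ≫ Hom.snd f = A.hom :=
  f.property

-- `x.hom` has type `j ⟶ (src C).obj x.right`, which is `j ⟶ x.right.left` only up to unfolding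
-- `src`; this defeats `simp` and `rw`, so the remaining proofs are terms checked by unification.
lemma under_comp_w {j : C} {x y : StructuredArrow j (src C)} (f : x ⟶ y) :
    (y.hom ≫ y.right.hom) ≫ Hom.snd f.right = x.hom ≫ x.right.hom := by
  rw [← StructuredArrow.w f]
  exact (Category.assoc _ _ _).trans ((Category.assoc _ _ _).trans (x.hom ≫= Hom.w f.right))

variable (j : C)

def idUnder : StructuredArrow j (src C) :=
  StructuredArrow.mk (Y := (⟨j, j, 𝟙 j⟩ : TwOp C)) (𝟙 j)

def collapse : StructuredArrow j (src C) ⥤ StructuredArrow j (src C) where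
  obj x := StructuredArrow.mk (Y := (⟨j, x.right.right, x.hom ≫ x.right.hom⟩ : TwOp C)) (𝟙 j)
  map f := StructuredArrow.homMk
    (homMk (𝟙 j) (Hom.snd f.right :) ((Category.id_comp _).trans (under_comp_w f)))
    (Category.comp_id _)
  map_id _ := by ext <;> rfl
  map_comp _ _ := by ext; exacts [(Category.comp_id _).symm, rfl]

def collapseToId : collapse j ⟶ 𝟭 _ where
  app x := StructuredArrow.homMk (homMk x.hom (𝟙 _) (congrArg (x.hom ≫ ·) (Category.comp_id _)))
    (Category.id_comp _)
  naturality x y f := by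
    ext
    exacts [(Category.id_comp _).trans (StructuredArrow.w f).symm,
      (Category.id_comp _).trans (Category.comp_id _).symm]

def collapseToIdUnder :
    collapse j ⟶ (Functor.const (StructuredArrow j (src C))).obj (idUnder j) where
  app x := StructuredArrow.homMk (homMk (𝟙 j) (x.hom ≫ x.right.hom)
    ((Category.id_comp _).trans (Category.id_comp _))) (Category.id_comp _)
  naturality x y f := by
    ext
    exacts [rfl, (under_comp_w f).trans (Category.id_comp _).symm]

end TwOp

/-- The source functor is homotopy terminal: every comma category `(j ↓ s)`
has contractible nerve. -/
theorem source_functor_homotopy_terminal (C : Type u) [Category.{v} C] (j : C) :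
    SSetContractible (nerve (StructuredArrow j (TwOp.src C))) :=
  sSetContractible_nerve_of_natTrans _ (TwOp.collapseToId j) (TwOp.collapseToIdUnder j)
end

section
/- Let G be a group, C and D categories with G-actions where the action on C and on C' is trivial, and suppose given G-equivariant functors I : C → D, I' : C' → D', F₁ : C → C', F₂ : D → D', together with a G-fixed natural isomorphism η : I' ∘ F₁ ≅ F₂ ∘ I. Then there is a G-equivariant functor D_I → D' which restricts to I' ∘ F₁ on the full subcategory on ob(C) and to F₂ on the full subcategory on ob(D), defined on cross morphisms by conjugating with η; moreover the square with the equivariant equivalence D_I → D and the functor C → D_I commutes strictly. -/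
/-!
STATEMENT 6: Given `G`-equivariant functors `I : C ⥤ D`, `I' : C' ⥤ D'`,
`F₁ : C ⥤ C'`, `F₂ : D ⥤ D'` (where the `G`-actions on `C` and `C'` are
trivial) and a `G`-fixed natural isomorphism `η : I' ∘ F₁ ≅ F₂ ∘ I`, there is
a `G`-equivariant functor `D_I ⥤ D'` restricting to `I' ∘ F₁` on `ob C` and
to `F₂` on `ob D`, defined on cross morphisms by conjugating with `η`;
moreover the square formed with the equivalence `D_I ⥤ D` and the functor
`C ⥤ D_I` commutes strictly.
-/

open CategoryTheory

universe w v₁ u₁ v₂ u₂ v₃ u₃ v₄ u₄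

variable {C : Type u₁} [Category.{v₁} C] {D : Type u₂} [Category.{v₂} D]
variable {C' : Type u₃} [Category.{v₃} C'] {D' : Type u₄} [Category.{v₄} D']

/-- The objects of the mapping-cylinder category `D_I`. -/
def DI (_ : C ⥤ D) : Type max u₁ u₂ := Sum C D

/-- The underlying object in `D` of an object of `D_I`. -/
def DI.toD (I : C ⥤ D) : DI I → D
  | Sum.inl c => I.obj c
  | Sum.inr d => d

/-- `D_I` is a category, with hom-sets computed in `D`. -/
instance DI.category (I : C ⥤ D) : Category (DI I) where
  Hom a b := DI.toD I a ⟶ DI.toD I b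
  id a := 𝟙 (DI.toD I a)
  comp f g := f ≫ g

/-- The canonical comparison functor `D_I ⥤ D`. -/
def DI.cmp (I : C ⥤ D) : DI I ⥤ D where
  obj := DI.toD I
  map f := f

/-- The canonical functor `C ⥤ D_I` (the inclusion of the objects of `C`). -/
def DI.inlF (I : C ⥤ D) : C ⥤ DI I where
  obj c := Sum.inl c
  map f := I.map f
  map_id := by intros; simp; rfl
  map_comp := by intros; simp; rfl

/-- The canonical functor `D ⥤ D_I` (the inclusion of the objects of `D`). -/
def DI.inrF (I : C ⥤ D) : D ⥤ DI I where
  obj d := Sum.inr d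
  map f := f

/-!
The glued functor is `DI.cmp I ⋙ F₂` with each object `c` of `C` relabelled as `I'.obj (F₁.obj c)`
through `η⁻¹` (`Functor.copyObj`). Equivariance then reduces to that of `DI.cmp I ⋙ F₂`, which is
the equivariance of `DI.cmp I` and of `F₂`, together with the invariance of the relabelling
isomorphisms: `η⁻¹` is `G`-fixed because `η` is, and the identities are fixed trivially.
-/

namespace CategoryTheory

theorem Iso.inv_heq_inv_of_hom_heq {E : Type*} [Category E] {X Y X' Y' : E}
    {e : X ≅ Y} {e' : X' ≅ Y'} (hX : X = X') (hY : Y = Y') (h : e.hom ≍ e'.hom) :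
    e.inv ≍ e'.inv := by
  subst hX hY
  exact heq_of_eq ((Iso.inv_eq_inv e e').2 (eq_of_heq h))

theorem Functor.comp_copyObj_eq_copyObj_comp {E E' : Type*} [Category E] [Category E']
    (F : E ⥤ E') (obj : E → E') (e : ∀ X, F.obj X ≅ obj X) (Φ : E ⥤ E) (ρ : E' ⥤ E')
    (hF : Φ ⋙ F = F ⋙ ρ) (hobj : ∀ X, obj (Φ.obj X) = ρ.obj (obj X))
    (he : ∀ X, (e (Φ.obj X)).hom ≍ ρ.map (e X).hom) :
    Φ ⋙ F.copyObj obj e = F.copyObj obj e ⋙ ρ := by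
  have he_inv : ∀ X, (e (Φ.obj X)).inv ≍ ρ.map (e X).inv := fun X =>
    Iso.inv_heq_inv_of_hom_heq (e' := ρ.mapIso (e X)) (Functor.congr_obj hF X) (hobj X) (he X)
  refine Functor.hext hobj fun X Y f => ?_
  simp only [Functor.comp_map, Functor.copyObj, Functor.map_comp]
  exact heq_comp (hobj X) (Functor.congr_obj hF X) (hobj Y) (he_inv X)
    (heq_comp (Functor.congr_obj hF X) (Functor.congr_obj hF Y) (hobj Y)
      (Functor.hcongr_hom hF f) (he Y))

end CategoryTheory

namespace DI

variable (I : C ⥤ D) (I' : C' ⥤ D') (F₁ : C ⥤ C') (F₂ : D ⥤ D') (η : F₁ ⋙ I' ≅ I ⋙ F₂)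

def glueObj : DI I → D'
  | Sum.inl c => I'.obj (F₁.obj c)
  | Sum.inr d => F₂.obj d

def glueIso : ∀ X : DI I, (DI.cmp I ⋙ F₂).obj X ≅ glueObj I I' F₁ F₂ X
  | Sum.inl c => (η.app c).symm
  | Sum.inr d => Iso.refl (F₂.obj d)

def glue : DI I ⥤ D' := (DI.cmp I ⋙ F₂).copyObj (glueObj I I' F₁ F₂) (glueIso I I' F₁ F₂ η)

theorem glue_map_inl_inr (c : C) (d : D) (f : I.obj c ⟶ d) :
    (glue I I' F₁ F₂ η).map (X := Sum.inl c) (Y := Sum.inr d) f = η.hom.app c ≫ F₂.map f := by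
  change η.hom.app c ≫ F₂.map f ≫ 𝟙 (F₂.obj d) = _
  rw [Category.comp_id]

theorem inlF_comp_glue : DI.inlF I ⋙ glue I I' F₁ F₂ η = F₁ ⋙ I' :=
  Functor.hext (fun _ => rfl) fun _ _ f => heq_of_eq (NatIso.naturality_2 η f)

theorem inrF_comp_glue : DI.inrF I ⋙ glue I I' F₁ F₂ η = F₂ := by
  refine Functor.hext (fun _ => rfl) fun d d' f => heq_of_eq ?_
  change 𝟙 (F₂.obj d) ≫ F₂.map f ≫ 𝟙 (F₂.obj d') = F₂.map f
  simp

theorem comp_glue_eq_glue_comp (Φ : DI I ⥤ DI I) (ρ : D ⥤ D) (ρ' : D' ⥤ D')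
    (hΦl : ∀ c, Φ.obj (Sum.inl c) = Sum.inl c)
    (hΦr : ∀ d, Φ.obj (Sum.inr d) = Sum.inr (ρ.obj d))
    (hΦ : Φ ⋙ DI.cmp I = DI.cmp I ⋙ ρ) (hI : I ⋙ ρ = I) (hI' : I' ⋙ ρ' = I')
    (hF₂ : ρ ⋙ F₂ = F₂ ⋙ ρ') (hη : ∀ c, ρ'.map (η.hom.app c) ≍ η.hom.app c) :
    Φ ⋙ glue I I' F₁ F₂ η = glue I I' F₁ F₂ η ⋙ ρ' := by
  have hF : Φ ⋙ DI.cmp I ⋙ F₂ = (DI.cmp I ⋙ F₂) ⋙ ρ' :=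
    calc Φ ⋙ DI.cmp I ⋙ F₂ = (Φ ⋙ DI.cmp I) ⋙ F₂ := rfl
      _ = DI.cmp I ⋙ ρ ⋙ F₂ := by rw [hΦ]; rfl
      _ = (DI.cmp I ⋙ F₂) ⋙ ρ' := by rw [hF₂]; rfl
  refine Functor.comp_copyObj_eq_copyObj_comp _ _ _ _ _ hF ?_ ?_
  · rintro (c | d)
    · rw [hΦl]
      exact (Functor.congr_obj hI' (F₁.obj c)).symm
    · rw [hΦr]
      exact Functor.congr_obj hF₂ d
  · rintro (c | d)
    · rw [hΦl]
      have hIc : ρ'.obj (F₂.obj (I.obj c)) = F₂.obj (I.obj c) :=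
        (Functor.congr_obj hF₂ (I.obj c)).symm.trans (congrArg F₂.obj (Functor.congr_obj hI c))
      exact (Iso.inv_heq_inv_of_hom_heq (e := ρ'.mapIso (η.app c)) (e' := η.app c)
        (Functor.congr_obj hI' (F₁.obj c)) hIc (hη c)).symm
    · rw [hΦr]
      exact (congr_arg_heq CategoryStruct.id (Functor.congr_obj hF₂ d)).trans
        (heq_of_eq (ρ'.map_id (F₂.obj d)).symm)

end DI

theorem glued_functor_on_DI_equivariant_and_strict_general
    {G : Type w}
    (ρD : G → D ⥤ D) (ρD' : G → D' ⥤ D')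
    (I : C ⥤ D) (I' : C' ⥤ D') (F₁ : C ⥤ C') (F₂ : D ⥤ D')
    -- `I` and `I'` are equivariant (trivial actions on `C`, `C'`)
    (hI : ∀ g : G, I ⋙ ρD g = I) (hI' : ∀ g : G, I' ⋙ ρD' g = I')
    -- `F₂` is equivariant
    (hF₂ : ∀ g : G, ρD g ⋙ F₂ = F₂ ⋙ ρD' g)
    -- the natural isomorphism `η : I' ∘ F₁ ≅ F₂ ∘ I`, which is `G`-fixed
    (η : F₁ ⋙ I' ≅ I ⋙ F₂)
    (hη : ∀ (g : G) (c : C), HEq ((ρD' g).map (η.hom.app c)) (η.hom.app c))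
    -- `G` acts on `D_I` via its actions on `C` (trivially) and `D`
    (A : G → DI I ⥤ DI I)
    (hA₁ : ∀ (g : G) (c : C), (A g).obj (Sum.inl c) = Sum.inl c)
    (hA₂ : ∀ (g : G) (d : D), (A g).obj (Sum.inr d) = Sum.inr ((ρD g).obj d))
    (hA₃ : ∀ g : G, A g ⋙ DI.cmp I = DI.cmp I ⋙ ρD g) :
    ∃ Θ : DI I ⥤ D',
      -- `Θ` is `G`-equivariant
      (∀ g : G, A g ⋙ Θ = Θ ⋙ ρD' g) ∧
      -- `Θ` restricts to `I' ∘ F₁` on the objects of `C`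
      DI.inlF I ⋙ Θ = F₁ ⋙ I' ∧
      -- `Θ` restricts to `F₂` on the objects of `D`
      DI.inrF I ⋙ Θ = F₂ ∧
      -- on cross morphisms, `Θ` is given by conjugating with `η`
      (∀ (c : C) (d : D) (f : I.obj c ⟶ d),
        HEq (Θ.map (X := Sum.inl c) (Y := Sum.inr d) f)
          (η.hom.app c ≫ F₂.map f)) ∧
      -- the square with the equivalence `D_I ⥤ D` and `C ⥤ D_I` commutes
      -- strictly
      DI.inlF I ⋙ DI.cmp I = I :=
  ⟨DI.glue I I' F₁ F₂ η,
    fun g => DI.comp_glue_eq_glue_comp I I' F₁ F₂ η (A g) (ρD g) (ρD' g) (hA₁ g) (hA₂ g) (hA₃ g)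
      (hI g) (hI' g) (hF₂ g) (hη g),
    DI.inlF_comp_glue I I' F₁ F₂ η, DI.inrF_comp_glue I I' F₁ F₂ η,
    fun c d f => heq_of_eq (DI.glue_map_inl_inr I I' F₁ F₂ η c d f), rfl⟩

theorem glued_functor_on_DI_equivariant_and_strict
    {G : Type w} [Group G]
    (ρD : G → D ⥤ D) (ρD' : G → D' ⥤ D')
    (hDone : ρD 1 = 𝟭 D) (hDmul : ∀ g h : G, ρD (g * h) = ρD h ⋙ ρD g)
    (hD'one : ρD' 1 = 𝟭 D') (hD'mul : ∀ g h : G, ρD' (g * h) = ρD' h ⋙ ρD' g)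
    (I : C ⥤ D) (I' : C' ⥤ D') (F₁ : C ⥤ C') (F₂ : D ⥤ D')
    -- `I` and `I'` are equivariant (trivial actions on `C`, `C'`)
    (hI : ∀ g : G, I ⋙ ρD g = I) (hI' : ∀ g : G, I' ⋙ ρD' g = I')
    -- `F₂` is equivariant
    (hF₂ : ∀ g : G, ρD g ⋙ F₂ = F₂ ⋙ ρD' g)
    -- the natural isomorphism `η : I' ∘ F₁ ≅ F₂ ∘ I`, which is `G`-fixed
    (η : F₁ ⋙ I' ≅ I ⋙ F₂)
    (hη : ∀ (g : G) (c : C), HEq ((ρD' g).map (η.hom.app c)) (η.hom.app c))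
    -- `G` acts on `D_I` via its actions on `C` (trivially) and `D`
    (A : G → DI I ⥤ DI I)
    (hA₁ : ∀ (g : G) (c : C), (A g).obj (Sum.inl c) = Sum.inl c)
    (hA₂ : ∀ (g : G) (d : D), (A g).obj (Sum.inr d) = Sum.inr ((ρD g).obj d))
    (hA₃ : ∀ g : G, A g ⋙ DI.cmp I = DI.cmp I ⋙ ρD g) :
    ∃ Θ : DI I ⥤ D',
      -- `Θ` is `G`-equivariant
      (∀ g : G, A g ⋙ Θ = Θ ⋙ ρD' g) ∧
      -- `Θ` restricts to `I' ∘ F₁` on the objects of `C`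
      DI.inlF I ⋙ Θ = F₁ ⋙ I' ∧
      -- `Θ` restricts to `F₂` on the objects of `D`
      DI.inrF I ⋙ Θ = F₂ ∧
      -- on cross morphisms, `Θ` is given by conjugating with `η`
      (∀ (c : C) (d : D) (f : I.obj c ⟶ d),
        HEq (Θ.map (X := Sum.inl c) (Y := Sum.inr d) f)
          (η.hom.app c ≫ F₂.map f)) ∧
      -- the square with the equivalence `D_I ⥤ D` and `C ⥤ D_I` commutes
      -- strictly
      DI.inlF I ⋙ DI.cmp I = I :=
  glued_functor_on_DI_equivariant_and_strict_general ρD ρD' I I' F₁ F₂ hI hI' hF₂ η hη A hA₁ hA₂ hA₃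
end

section
/- Let G be a group acting on a category D, and EG the chaotic category on G with G acting by left translation. For any pseudoequivariant functor Φ : C → D from a category C with trivial G-action, the square relating the induced strictly equivariant functor Φ~ : Fun(EG,C) → Fun(EG,D) and Φ commutes: precomposing Φ~ with the equivalence C ≃ Fun(EG,C) (constant-functor embedding, noting the G-action on C is trivial so this lands correctly) and postcomposing with evaluation at the identity element e ∈ EG gives a functor naturally isomorphic to Φ. In particular Φ~ is an equivalence of categories whenever Φ is. -/
/-!
STATEMENT 7: For a pseudoequivariant functor `Φ : C ⥤ D` from a category with
trivial `G`-action to a `G`-category `D`, the induced strictly equivariant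
functor `Φ~ : Fun(EG, C) ⥤ Fun(EG, D)` is compatible with `Φ`: precomposing
with the constant-functor embedding `C ⥤ Fun(EG, C)` and postcomposing with
evaluation at `e` gives a functor naturally isomorphic to `Φ`.  In particular
`Φ~` is an equivalence of categories whenever `Φ` is.
-/

open CategoryTheory

universe w v₁ u₁ v₂ u₂

/-- The chaotic (indiscrete) category on the elements of `G`. -/
structure Chaotic (G : Type w) where
  el : G

instance (G : Type w) : Category (Chaotic G) where
  Hom _ _ := PUnit
  id _ := PUnit.unit
  comp _ _ := PUnit.unit

/-- Left translation by `g` on the chaotic category. -/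
def Chaotic.trans {G : Type w} [Group G] (g : G) : Chaotic G ⥤ Chaotic G where
  obj x := ⟨g * x.el⟩
  map _ := PUnit.unit

variable {G : Type w} [Group G]
variable {C : Type u₁} [Category.{v₁} C] {D : Type u₂} [Category.{v₂} D]

/-- The conjugation action of `g` on `Fun(EG, D)` for a `G`-category `D`:
`(g·Φ)(x) = g·Φ(g⁻¹x)`. -/
def conjAction (ρ : G → D ⥤ D) (g : G) :
    (Chaotic G ⥤ D) ⥤ (Chaotic G ⥤ D) :=
  (Functor.whiskeringLeft (Chaotic G) (Chaotic G) D).obj (Chaotic.trans g⁻¹) ⋙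
    (Functor.whiskeringRight (Chaotic G) D D).obj (ρ g)

/-- The conjugation action of `g` on `Fun(EG, C)` when the action on `C` is
trivial: `(g·Φ)(x) = Φ(g⁻¹x)`. -/
def conjTrivial (C : Type u₁) [Category.{v₁} C] (g : G) :
    (Chaotic G ⥤ C) ⥤ (Chaotic G ⥤ C) :=
  (Functor.whiskeringLeft (Chaotic G) (Chaotic G) C).obj (Chaotic.trans g⁻¹)

/-!
The data `(Φ, θ)` assemble into a functor `Θ : EG ⥤ (C ⥤ D)`, `x ↦ Φ ⋙ ρ x` with transition
isomorphisms `θ_x⁻¹ ≫ θ_y`, and the cocycle condition says exactly that `Θ` is strictly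
`G`-equivariant. `Φ~` evaluates `Θ` pointwise, `F ↦ (x ↦ Θ(x)(F x))`, so it inherits strict
equivariance. At `x = e` it is `Φ ⋙ ρ e ≅ Φ` via `θ_e`, and since evaluation at an object of `EG` is
an equivalence, `Φ~` is an equivalence as soon as `Φ` is.
-/

section ApplyPointwise

variable {J : Type*} [Category J] {E : Type*} [Category E]

@[simps]
def applyPointwise (Θ : J ⥤ C ⥤ D) : (J ⥤ C) ⥤ (J ⥤ D) where
  obj F :=
    { obj j := (Θ.obj j).obj (F.obj j)
      map f := (Θ.obj _).map (F.map f) ≫ (Θ.map f).app _ }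
  map α :=
    { app j := (Θ.obj j).map (α.app j)
      naturality _ _ f := by simp [← Functor.map_comp] }

lemma whiskeringLeft_comp_applyPointwise {J' : Type*} [Category J'] (T : J' ⥤ J)
    (Θ : J ⥤ C ⥤ D) :
    (Functor.whiskeringLeft J' J C).obj T ⋙ applyPointwise (T ⋙ Θ) =
      applyPointwise Θ ⋙ (Functor.whiskeringLeft J' J D).obj T :=
  rfl

lemma applyPointwise_comp_whiskeringRight (Θ : J ⥤ C ⥤ D) (R : D ⥤ E) :
    applyPointwise (Θ ⋙ (Functor.whiskeringRight C D E).obj R) =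
      applyPointwise Θ ⋙ (Functor.whiskeringRight J D E).obj R := by
  refine CategoryTheory.Functor.ext (fun F => CategoryTheory.Functor.hext (fun _ => rfl)
    (fun _ _ _ => heq_of_eq (R.map_comp _ _).symm)) (fun F F' α => ?_)
  ext x
  simp only [applyPointwise_map_app, NatTrans.comp_app, eqToHom_app]
  -- the remaining `eqToHom`s are identities up to unfolding `applyPointwise`
  exact (Category.comp_id _).symm.trans (Category.id_comp _).symm

lemma whiskeringLeft_comp_applyPointwise_of_eq {Θ : J ⥤ C ⥤ D} {T : J ⥤ J} {R : D ⥤ D}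
    (hΘ : Θ = T ⋙ Θ ⋙ (Functor.whiskeringRight C D D).obj R) :
    (Functor.whiskeringLeft J J C).obj T ⋙ applyPointwise Θ =
      applyPointwise Θ ⋙ (Functor.whiskeringLeft J J D).obj T ⋙
        (Functor.whiskeringRight J D D).obj R := by
  conv_lhs => rw [hΘ, ← Functor.assoc, applyPointwise_comp_whiskeringRight, ← Functor.assoc,
    whiskeringLeft_comp_applyPointwise]
  rfl

lemma applyPointwise_comp_evaluation (Θ : J ⥤ C ⥤ D) (j : J) :
    applyPointwise Θ ⋙ (evaluation J D).obj j = (evaluation J C).obj j ⋙ Θ.obj j :=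
  rfl

lemma const_comp_applyPointwise_comp_evaluation (Θ : J ⥤ C ⥤ D) (j : J) :
    Functor.const J ⋙ applyPointwise Θ ⋙ (evaluation J D).obj j = Θ.obj j :=
  rfl

lemma isEquivalence_applyPointwise (Θ : J ⥤ C ⥤ D) (j : J)
    [((evaluation J C).obj j).IsEquivalence] [((evaluation J D).obj j).IsEquivalence]
    (hΘ : (Θ.obj j).IsEquivalence) : (applyPointwise Θ).IsEquivalence := by
  have : (applyPointwise Θ ⋙ (evaluation J D).obj j).IsEquivalence := by
    rw [applyPointwise_comp_evaluation]
    infer_instance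
  exact Functor.isEquivalence_of_comp_right _ ((evaluation J D).obj j)

end ApplyPointwise

namespace Chaotic

variable {ι : Type*}

def iso (x y : Chaotic ι) : x ≅ y := ⟨PUnit.unit, PUnit.unit, rfl, rfl⟩

instance isEquivalence_evaluation (A : Type*) [Category A] (x : Chaotic ι) :
    ((evaluation (Chaotic ι) A).obj x).IsEquivalence :=
  .mk' (Functor.const _)
    (NatIso.ofComponents fun F => NatIso.ofComponents (fun y => F.mapIso (iso y x))
      (fun _ => by dsimp; rw [Category.comp_id, ← F.map_comp]; rfl))
    (Functor.constCompEvaluationObj A x)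

def functorOfIsos {A : Type*} [Category A] {X : ι → A} {c : A} (e : ∀ i, c ≅ X i) :
    Chaotic ι ⥤ A where
  obj x := X x.el
  map {x y} _ := (e x.el).inv ≫ (e y.el).hom

/-- `Chaotic ι` has a `Category` instance for every universe of its `PUnit` hom types; this functor
identifies any two of them (the source and target of `Φ~` are built on different ones). -/
def idFunctor : Chaotic ι ⥤ Chaotic ι where
  obj x := x
  map _ := PUnit.unit

instance : (idFunctor : Chaotic ι ⥤ Chaotic ι).IsEquivalence :=
  .mk' idFunctor (Iso.refl _) (Iso.refl _)

lemma trans_inv_comp_trans (g : G) : Chaotic.trans g⁻¹ ⋙ Chaotic.trans g = 𝟭 _ :=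
  CategoryTheory.Functor.ext (fun x => by simp [Chaotic.trans]) (fun _ _ _ => rfl)

end Chaotic

section Pseudoequivariant

variable {ρ : G → D ⥤ D} {Φ : C ⥤ D} {θ : ∀ g : G, Φ ≅ Φ ⋙ ρ g}

lemma trans_comp_functorOfIsos (hmul : ∀ g h : G, ρ (g * h) = ρ h ⋙ ρ g)
    (hcocycle : ∀ (g h : G) (c : C),
      (θ g).hom.app c ≫ (ρ g).map ((θ h).hom.app c) =
        (θ (g * h)).hom.app c ≫ eqToHom (by rw [hmul g h]; rfl))
    (g : G) :
    Chaotic.trans g ⋙ Chaotic.functorOfIsos θ =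
      Chaotic.functorOfIsos θ ⋙ (Functor.whiskeringRight C D D).obj (ρ g) := by
  let e : Chaotic.trans g ⋙ Chaotic.functorOfIsos θ ≅
      Chaotic.functorOfIsos θ ⋙ (Functor.whiskeringRight C D D).obj (ρ g) :=
    NatIso.ofComponents
      (fun x => (θ (g * x.el)).symm ≪≫ θ g ≪≫ Functor.isoWhiskerRight (θ x.el) (ρ g))
      (fun _ => by ext c; simp [Chaotic.functorOfIsos, Chaotic.trans])
  have hobj : ∀ x, (Chaotic.trans g ⋙ Chaotic.functorOfIsos θ).obj x =
      (Chaotic.functorOfIsos θ ⋙ (Functor.whiskeringRight C D D).obj (ρ g)).obj x :=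
    fun x => congrArg (Φ ⋙ ·) (hmul g x.el)
  -- `e` is natural for any `θ`; the cocycle condition says that its components are identities
  refine Functor.ext_of_iso e hobj (fun x => ?_)
  ext c
  show (θ (g * x.el)).inv.app c ≫ (θ g).hom.app c ≫ (ρ g).map ((θ x.el).hom.app c) = _
  rw [eqToHom_app, hcocycle, Iso.inv_hom_id_app_assoc]
  rfl

lemma functorOfIsos_eq_trans_inv_comp (hmul : ∀ g h : G, ρ (g * h) = ρ h ⋙ ρ g)
    (hcocycle : ∀ (g h : G) (c : C),
      (θ g).hom.app c ≫ (ρ g).map ((θ h).hom.app c) =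
        (θ (g * h)).hom.app c ≫ eqToHom (by rw [hmul g h]; rfl))
    (g : G) :
    Chaotic.functorOfIsos θ =
      Chaotic.trans g⁻¹ ⋙ Chaotic.functorOfIsos θ ⋙ (Functor.whiskeringRight C D D).obj (ρ g) := by
  rw [← trans_comp_functorOfIsos hmul hcocycle g, ← Functor.assoc, Chaotic.trans_inv_comp_trans,
    Functor.id_comp]

def inducedEquivariantFunctor (θ : ∀ g : G, Φ ≅ Φ ⋙ ρ g) : (Chaotic G ⥤ C) ⥤ (Chaotic G ⥤ D) :=
  (Functor.whiskeringLeft _ _ C).obj Chaotic.idFunctor ⋙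
    applyPointwise (Chaotic.functorOfIsos θ)

lemma conjTrivial_comp_inducedEquivariantFunctor (hmul : ∀ g h : G, ρ (g * h) = ρ h ⋙ ρ g)
    (hcocycle : ∀ (g h : G) (c : C),
      (θ g).hom.app c ≫ (ρ g).map ((θ h).hom.app c) =
        (θ (g * h)).hom.app c ≫ eqToHom (by rw [hmul g h]; rfl))
    (g : G) :
    conjTrivial C g ⋙ inducedEquivariantFunctor θ =
      inducedEquivariantFunctor θ ⋙ conjAction ρ g :=
  congrArg ((Functor.whiskeringLeft _ _ C).obj Chaotic.idFunctor ⋙ ·)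
    (whiskeringLeft_comp_applyPointwise_of_eq (functorOfIsos_eq_trans_inv_comp hmul hcocycle g))

def constCompInducedEquivariantFunctorCompEvaluationIso (θ : ∀ g : G, Φ ≅ Φ ⋙ ρ g)
    (x : Chaotic G) :
    Functor.const (Chaotic G) ⋙ inducedEquivariantFunctor θ ⋙ (evaluation (Chaotic G) D).obj x ≅
      Φ :=
  eqToIso (const_comp_applyPointwise_comp_evaluation _ _) ≪≫ (θ x.el).symm

lemma isEquivalence_inducedEquivariantFunctor (θ : ∀ g : G, Φ ≅ Φ ⋙ ρ g) [Φ.IsEquivalence] :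
    (inducedEquivariantFunctor θ).IsEquivalence := by
  have := isEquivalence_applyPointwise (Chaotic.functorOfIsos θ) ⟨1⟩
    (Functor.isEquivalence_of_iso (θ 1))
  exact Functor.isEquivalence_trans _ _

end Pseudoequivariant

theorem induced_functor_on_homotopy_fixed_data_compatible_with_Phi
    (ρ : G → D ⥤ D)
    (hmul : ∀ g h : G, ρ (g * h) = ρ h ⋙ ρ g)
    (Φ : C ⥤ D)
    (θ : ∀ g : G, Φ ≅ Φ ⋙ ρ g)
    (hcocycle : ∀ (g h : G) (c : C),
      (θ g).hom.app c ≫ (ρ g).map ((θ h).hom.app c) =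
        (θ (g * h)).hom.app c ≫ eqToHom (by rw [hmul g h]; rfl)) :
    ∃ Φt : (Chaotic G ⥤ C) ⥤ (Chaotic G ⥤ D),
      -- `Φ~` is strictly `G`-equivariant
      (∀ g : G, conjTrivial C g ⋙ Φt = Φt ⋙ conjAction ρ g) ∧
      -- the square relating `Φ~` and `Φ` commutes up to natural isomorphism:
      -- (constant embedding) ⋙ Φ~ ⋙ (evaluation at e) ≅ Φ
      Nonempty ((Functor.const (Chaotic G) ⋙ Φt ⋙
        (evaluation (Chaotic G) D).obj ⟨(1 : G)⟩) ≅ Φ) ∧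
      -- `Φ~` is an equivalence whenever `Φ` is
      (Φ.IsEquivalence → Φt.IsEquivalence) :=
  ⟨inducedEquivariantFunctor θ, conjTrivial_comp_inducedEquivariantFunctor hmul hcocycle,
    ⟨constCompInducedEquivariantFunctorCompEvaluationIso θ _⟩,
    fun _ => isEquivalence_inducedEquivariantFunctor θ⟩
end
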